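/- Let ε > 0, let S ⊂ (0,1) be an open set with Lebesgue measure L¹(S) < ε, and let γ: [0,1] → ℝ⁴ be a Lipschitz curve such that γ'(t) = (0,1,0,0) for almost every t ∈ (0,1) ∖ S and such that γ₄ is strictly decreasing on (0,1) ∖ S (if a, b ∈ (0,1) ∖ S and a < b then γ₄(b) < γ₄(a)). Then for every C¹ horizontal curve Γ: [0,1] → ℝ⁴ in the Engel group, the Lebesgue measure of {t ∈ [0,1] : Γ(t) = γ(t)} is less than ε. -/

import Mathlib

open MeasureTheory Set

/-- A vector `u` is horizontal at the point `ζ` in the Engel group. -/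
def EngelHoriz (ζ u : EuclideanSpace ℝ (Fin 4)) : Prop :=
  u 2 = u 1 * ζ 0 ∧ u 3 = u 1 * (ζ 0) ^ 2 / 2

/-- The vector `(0,1,0,0)` in ℝ⁴. -/
def e₂ : EuclideanSpace ℝ (Fin 4) := WithLp.toLp 2 (fun i => if i = 1 then 1 else 0)

/-!
At a point `t₀` where `Γ = γ` and `γ' = e₂`, and which is an accumulation point of such points,
the derivatives of `Γ` and `γ` computed along the coincidence set agree, so `Γ'₂(t₀) = 1`. By
continuity `Γ'₂ > 0` near `t₀`, and horizontality `Γ'₄ = Γ'₂ Γ₁² / 2` makes `Γ₄` nondecreasing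
there, contradicting the strict decrease of `γ₄ = Γ₄` on the coincidence set. Hence the points of
`(0,1) ∖ S` where `Γ = γ` and `γ' = e₂` are all isolated, so they form a countable set; since
`γ' = e₂` almost everywhere on `(0,1) ∖ S`, the coincidence set is contained in `S` up to a null
set. (Coordinates are numbered from 1 here, from 0 in the code.)
-/

open Filter Topology

theorem Set.Countable.of_forall_not_accPt {X : Type*} [TopologicalSpace X]
    [SecondCountableTopology X] {E : Set X} (h : ∀ x ∈ E, ¬AccPt x (𝓟 E)) : E.Countable := by
  have := discreteTopology_of_noAccPts h
  exact countable_coe_iff.mp (TopologicalSpace.separableSpace_iff_countable.mp inferInstance)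

theorem HasDerivWithinAt.eq_of_eqOn_of_accPt {𝕜 F : Type*} [NontriviallyNormedField 𝕜]
    [NormedAddCommGroup F] [NormedSpace 𝕜 F] {f g : 𝕜 → F} {f' g' : F} {s : Set 𝕜} {x : 𝕜}
    (hf : HasDerivWithinAt f f' s x) (hg : HasDerivWithinAt g g' s x) (hfg : EqOn f g s)
    (hx : x ∈ s) (hacc : AccPt x (𝓟 s)) : f' = g' :=
  hacc.uniqueDiffWithinAt.eq_deriv s (hf.congr_of_mem (fun _ hy => (hfg hy).symm) hx) hg

theorem EngelHoriz.fourth_nonneg {ζ u : EuclideanSpace ℝ (Fin 4)} (h : EngelHoriz ζ u)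
    (hu : 0 ≤ u 1) : 0 ≤ u 3 := by
  rw [h.2]
  positivity

section HorizontalCurve

variable {I : Set ℝ} {Γ Γ' : ℝ → EuclideanSpace ℝ (Fin 4)}

theorem monotoneOn_engel_fourth (hI : Convex ℝ I)
    (hΓ : ∀ t ∈ I, HasDerivWithinAt Γ (Γ' t) I t)
    (hhoriz : ∀ t ∈ I, EngelHoriz (Γ t) (Γ' t)) (hpos : ∀ t ∈ I, 0 ≤ Γ' t 1) :
    MonotoneOn (fun t => Γ t 3) I := by
  have hΓ₄ : ∀ t ∈ I, HasDerivWithinAt (fun t => Γ t 3) (Γ' t 3) I t := fun t ht =>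
    (EuclideanSpace.proj (𝕜 := ℝ) (3 : Fin 4)).hasFDerivAt.comp_hasDerivWithinAt t (hΓ t ht)
  refine monotoneOn_of_hasDerivWithinAt_nonneg hI (fun t ht => (hΓ₄ t ht).continuousWithinAt)
    (fun t ht => (hΓ₄ t (interior_subset ht)).mono interior_subset) fun t ht => ?_
  exact (hhoriz t (interior_subset ht)).fourth_nonneg (hpos t (interior_subset ht))

theorem exists_nhds_monotoneOn_engel_fourth (hI : Convex ℝ I)
    (hΓ : ∀ t ∈ I, HasDerivWithinAt Γ (Γ' t) I t) (hΓ'c : ContinuousOn Γ' I)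
    (hhoriz : ∀ t ∈ I, EngelHoriz (Γ t) (Γ' t)) {t₀ : ℝ} (ht₀ : t₀ ∈ I) (hpos : 0 < Γ' t₀ 1) :
    ∃ U ∈ 𝓝 t₀, MonotoneOn (fun t => Γ t 3) (U ∩ I) := by
  have hev : ∀ᶠ t in 𝓝[I] t₀, 0 < Γ' t 1 :=
    ((EuclideanSpace.proj (1 : Fin 4)).continuous.comp_continuousOn hΓ'c t₀ ht₀).eventually
      (eventually_gt_nhds hpos)
  obtain ⟨δ, hδ, hball⟩ := Metric.mem_nhdsWithin_iff.1 hev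
  refine ⟨Metric.ball t₀ δ, Metric.ball_mem_nhds t₀ hδ, ?_⟩
  exact monotoneOn_engel_fourth ((convex_ball t₀ δ).inter hI)
    (fun t ht => (hΓ t ht.2).mono inter_subset_right) (fun t ht => hhoriz t ht.2)
    fun t ht => (hball ht).le

theorem not_accPt_of_eqOn_of_strictAntiOn (hI : Convex ℝ I)
    (hΓ : ∀ t ∈ I, HasDerivWithinAt Γ (Γ' t) I t) (hΓ'c : ContinuousOn Γ' I)
    (hhoriz : ∀ t ∈ I, EngelHoriz (Γ t) (Γ' t)) {γ : ℝ → EuclideanSpace ℝ (Fin 4)} {T : Set ℝ}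
    (hTI : T ⊆ I) (hEq : EqOn Γ γ T) (hγ : ∀ t ∈ T, HasDerivWithinAt γ e₂ T t)
    (hanti : StrictAntiOn (fun t => γ t 3) T) : ∀ t ∈ T, ¬AccPt t (𝓟 T) := by
  intro t₀ ht₀ hacc
  have hΓ't₀ : Γ' t₀ = e₂ :=
    ((hΓ t₀ (hTI ht₀)).mono hTI).eq_of_eqOn_of_accPt (hγ t₀ ht₀) hEq ht₀ hacc
  obtain ⟨U, hU, hmono⟩ :=
    exists_nhds_monotoneOn_engel_fourth hI hΓ hΓ'c hhoriz (hTI ht₀) (by simp [hΓ't₀, e₂])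
  obtain ⟨s, ⟨hsU, hsT⟩, hst₀⟩ := (accPt_iff_nhds.1 hacc) U hU
  have hΓanti : StrictAntiOn (fun t => Γ t 3) T := fun a ha b hb hab => by
    simpa only [hEq ha, hEq hb] using hanti ha hb hab
  have hs : s ∈ U ∩ I := ⟨hsU, hTI hsT⟩
  have ht₀' : t₀ ∈ U ∩ I := ⟨mem_of_mem_nhds hU, hTI ht₀⟩
  rcases hst₀.lt_or_gt with h | h
  · exact (hΓanti hsT ht₀ h).not_ge (hmono hs ht₀' h.le)
  · exact (hΓanti ht₀ hsT h).not_ge (hmono ht₀' hs h.le)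

end HorizontalCurve

theorem bad_curve_meets_C1_in_small_set_general (ε : ℝ)
    (S : Set ℝ) (hSopen : IsOpen S)
    (hSmeas : volume S < ENNReal.ofReal ε)
    (γ : ℝ → EuclideanSpace ℝ (Fin 4))
    (hderiv : ∀ᵐ t ∂(volume.restrict (Set.Ioo (0:ℝ) 1 \ S)), HasDerivAt γ e₂ t)
    (hdec : ∀ a ∈ Set.Ioo (0:ℝ) 1 \ S, ∀ b ∈ Set.Ioo (0:ℝ) 1 \ S,
      a < b → γ b 3 < γ a 3)
    (Γ Γ' : ℝ → EuclideanSpace ℝ (Fin 4))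
    (hΓ : ∀ t ∈ Set.Icc (0:ℝ) 1, HasDerivWithinAt Γ (Γ' t) (Set.Icc (0:ℝ) 1) t)
    (hΓ'c : ContinuousOn Γ' (Set.Icc (0:ℝ) 1))
    (hhoriz : ∀ t ∈ Set.Icc (0:ℝ) 1, EngelHoriz (Γ t) (Γ' t)) :
    volume {t ∈ Set.Icc (0:ℝ) 1 | Γ t = γ t} < ENNReal.ofReal ε := by
  set G := {t ∈ Ioo (0:ℝ) 1 \ S | Γ t = γ t ∧ HasDerivAt γ e₂ t}
  have hG : G.Countable := Set.Countable.of_forall_not_accPt <|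
    not_accPt_of_eqOn_of_strictAntiOn (convex_Icc 0 1) hΓ hΓ'c hhoriz
      (fun t ht => Ioo_subset_Icc_self ht.1.1) (fun t ht => ht.2.1)
      (fun t ht => ht.2.2.hasDerivWithinAt) fun a ha b hb => hdec a ha.1 b hb.1
  have hends : ∀ᵐ t ∂volume, t ∉ ({0, 1} : Set ℝ) :=
    ((countable_singleton 1).insert 0).ae_notMem volume
  have hdiff : ∀ᵐ t ∂volume, t ∈ Ioo (0:ℝ) 1 \ S → HasDerivAt γ e₂ t :=
    (ae_restrict_iff' (measurableSet_Ioo.diff hSopen.measurableSet)).1 hderiv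
  refine lt_of_le_of_lt (measure_mono_ae ?_) hSmeas
  filter_upwards [hends, hdiff, hG.ae_notMem volume] with t hends hdiff hG ⟨ht, hΓγ⟩
  by_contra htS
  have htD : t ∈ Ioo (0:ℝ) 1 \ S :=
    ⟨⟨ht.1.lt_of_ne (by grind), ht.2.lt_of_ne (by grind)⟩, htS⟩
  exact hG ⟨htD, hΓγ, hdiff htD⟩

/-- A Lipschitz curve whose derivative is `(0,1,0,0)` almost everywhere off a small open
set `S` and whose fourth component is strictly decreasing off `S` agrees with any C¹
horizontal curve in the Engel group only on a set of measure less than `ε`. -/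
theorem bad_curve_meets_C1_in_small_set (ε : ℝ) (hε : 0 < ε)
    (S : Set ℝ) (hSopen : IsOpen S) (hSsub : S ⊆ Set.Ioo 0 1)
    (hSmeas : volume S < ENNReal.ofReal ε)
    (γ : ℝ → EuclideanSpace ℝ (Fin 4))
    (K : NNReal) (hLip : LipschitzOnWith K γ (Set.Icc 0 1))
    (hderiv : ∀ᵐ t ∂(volume.restrict (Set.Ioo (0:ℝ) 1 \ S)), HasDerivAt γ e₂ t)
    (hdec : ∀ a ∈ Set.Ioo (0:ℝ) 1 \ S, ∀ b ∈ Set.Ioo (0:ℝ) 1 \ S,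
      a < b → γ b 3 < γ a 3)
    (Γ Γ' : ℝ → EuclideanSpace ℝ (Fin 4))
    (hΓ : ∀ t ∈ Set.Icc (0:ℝ) 1, HasDerivWithinAt Γ (Γ' t) (Set.Icc (0:ℝ) 1) t)
    (hΓ'c : ContinuousOn Γ' (Set.Icc (0:ℝ) 1))
    (hhoriz : ∀ t ∈ Set.Icc (0:ℝ) 1, EngelHoriz (Γ t) (Γ' t)) :
    volume {t ∈ Set.Icc (0:ℝ) 1 | Γ t = γ t} < ENNReal.ofReal ε :=
  bad_curve_meets_C1_in_small_set_general ε S hSopen hSmeas γ hderiv hdec Γ Γ' hΓ hΓ'c hhoriz
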